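/- arXiv:2405.17876 — 2 statements merged into one kernel-verified Lean document; each statement's English description precedes it below -/
import Mathlib

section
/- Let E be a finite-dimensional real inner-product space and F : E → ℝ be differentiable with L_v-Lipschitz gradient. Fix v⁰ ∈ E, an integer K_v ≥ 2, and a stepsize 0 < η_v ≤ 1/(2 K_v L_v). Let g be a stochastic gradient oracle for F with variance σ_v², and let (v^k) be the SGD iterates from v⁰ with stepsize η_v driven by i.i.d. oracle samples. Then for every k ≥ 0, E‖v^{k+1} − v⁰‖² ≤ (1 + 2/(K_v − 1)) · E‖v^k − v⁰‖² + K_v η_v² σ_v² + 2 K_v η_v² ‖∇F(v⁰)‖². -/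
open MeasureTheory ProbabilityTheory

/-!
Conditionally on `v^k = x`, the next displacement is `x - η g(x, ξ) - v⁰` with `ξ ~ μ` independent
of `v^k`, so Fubini over the law of `v^k` times `μ` reduces the claim to a bound for fixed `x`.
There, Young's inequality with weight `1/(K-1)` gives
`E‖x - η g - v⁰‖² ≤ (1 + 1/(K-1))‖x - v⁰‖² + K η² E‖g(x, ξ)‖²`, unbiasedness gives
`E‖g(x, ξ)‖² ≤ σ² + ‖∇F x‖² ≤ σ² + 2L²‖x - v⁰‖² + 2‖∇F v⁰‖²`, and the stepsize condition makes
`2 K L² η² ≤ 1/(K-1)`.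

Since the Bochner integral of a non-integrable function is `0`, one also needs
`E‖v^k - v⁰‖² < ∞` whenever `E‖v^{k+1} - v⁰‖² < ∞`; this follows from the reverse bound
`(1 - 4η²L²)‖x - v⁰‖² ≤ 2 E‖x - η g - v⁰‖² + 2η²σ² + 4η²‖∇F v⁰‖²`.
-/

theorem norm_add_sq_le_one_add_mul_add {E : Type*} [SeminormedAddCommGroup E] (x y : E)
    {t : ℝ} (ht : 0 < t) :
    ‖x + y‖ ^ 2 ≤ (1 + t) * ‖x‖ ^ 2 + (1 + t⁻¹) * ‖y‖ ^ 2 := by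
  have hxy : 2 * ‖x‖ * ‖y‖ ≤ t * ‖x‖ ^ 2 + t⁻¹ * ‖y‖ ^ 2 := by
    have := sq_nonneg (t * ‖x‖ - ‖y‖)
    have h : t * (t * ‖x‖ ^ 2 + t⁻¹ * ‖y‖ ^ 2 - 2 * ‖x‖ * ‖y‖) = (t * ‖x‖ - ‖y‖) ^ 2 := by
      field_simp; ring
    nlinarith
  nlinarith [norm_add_le x y, norm_nonneg (x + y), norm_nonneg x, norm_nonneg y]

theorem integral_norm_sq_eq_integral_norm_sub_integral_sq_add {S E : Type*} [MeasurableSpace S]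
    {μ : Measure S} [IsProbabilityMeasure μ] [NormedAddCommGroup E] [InnerProductSpace ℝ E]
    [CompleteSpace E] {X : S → E} (hX : MemLp X 2 μ) :
    ∫ s, ‖X s‖ ^ 2 ∂μ = ∫ s, ‖X s - ∫ t, X t ∂μ‖ ^ 2 ∂μ + ‖∫ t, X t ∂μ‖ ^ 2 := by
  set m := ∫ t, X t ∂μ
  have hX1 : Integrable X μ := hX.integrable one_le_two
  have hX2 : Integrable (fun s => ‖X s‖ ^ 2) μ := hX.integrable_norm_pow two_ne_zero
  have hinner : Integrable (fun s => 2 * inner ℝ m (X s)) μ := (hX1.const_inner m).const_mul 2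
  simp_rw [norm_sub_sq_real, real_inner_comm m]
  rw [integral_add (f := fun s => ‖X s‖ ^ 2 - 2 * inner ℝ m (X s)) (hX2.sub hinner)
    (integrable_const _), integral_sub hX2 hinner, integral_const_mul, integral_inner hX1,
    real_inner_self_eq_norm_sq]
  simp only [integral_const, probReal_univ, smul_eq_mul, one_mul]
  ring

theorem memLp_two_of_integrable_norm_sub_smul_sub_sq {S E : Type*} [MeasurableSpace S]
    {μ : Measure S} [IsFiniteMeasure μ] [NormedAddCommGroup E] [NormedSpace ℝ E]
    {X : S → E} {x y : E} {η : ℝ} (hη : η ≠ 0) (hX : AEStronglyMeasurable X μ)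
    (h : Integrable (fun s => ‖x - η • X s - y‖ ^ 2) μ) : MemLp X 2 μ := by
  have hstep : MemLp (fun s => x - η • X s - y) 2 μ := (memLp_two_iff_integrable_sq_norm
    ((aestronglyMeasurable_const.sub (hX.const_smul η)).sub aestronglyMeasurable_const)).2 h
  convert ((memLp_const (x - y)).sub hstep).const_smul η⁻¹ using 1
  ext s
  simp [inv_smul_smul₀ hη]

section OracleStep

variable {E S : Type*} [NormedAddCommGroup E] [InnerProductSpace ℝ E] [CompleteSpace E]
  [MeasurableSpace S] {μ : Measure S} [IsProbabilityMeasure μ]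
  {G : E → E} {g : E → S → E} {L σ η : ℝ} {x y : E}

theorem integral_norm_oracle_sq_le (hmean : ∫ s, g x s ∂μ = G x)
    (hvar : ∫ s, ‖g x s - G x‖ ^ 2 ∂μ ≤ σ ^ 2) (hLip : ‖G x - G y‖ ≤ L * ‖x - y‖)
    (hx : MemLp (g x) 2 μ) :
    ∫ s, ‖g x s‖ ^ 2 ∂μ ≤ σ ^ 2 + 2 * L ^ 2 * ‖x - y‖ ^ 2 + 2 * ‖G y‖ ^ 2 := by
  have hG : ‖G x‖ ^ 2 ≤ 2 * L ^ 2 * ‖x - y‖ ^ 2 + 2 * ‖G y‖ ^ 2 := by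
    have hyoung := norm_add_sq_le_one_add_mul_add (G x - G y) (G y) one_pos
    rw [sub_add_cancel] at hyoung
    nlinarith [norm_nonneg (G x - G y)]
  rw [integral_norm_sq_eq_integral_norm_sub_integral_sq_add hx, hmean]
  linarith

theorem integral_norm_sub_smul_oracle_sq_le (hmean : ∫ s, g x s ∂μ = G x)
    (hvar : ∫ s, ‖g x s - G x‖ ^ 2 ∂μ ≤ σ ^ 2) (hLip : ‖G x - G y‖ ≤ L * ‖x - y‖)
    (hx : MemLp (g x) 2 μ) {K : ℝ} (hK : 1 < K) (hη : 0 ≤ η) (hL : 0 ≤ L)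
    (hηL : 2 * K * (η * L) ≤ 1) :
    ∫ s, ‖x - η • g x s - y‖ ^ 2 ∂μ ≤
      (1 + 2 / (K - 1)) * ‖x - y‖ ^ 2 + K * η ^ 2 * σ ^ 2 + 2 * K * η ^ 2 * ‖G y‖ ^ 2 := by
  have hK1 : 0 < K - 1 := sub_pos.2 hK
  have hyoung : ∀ s, ‖x - η • g x s - y‖ ^ 2 ≤
      (1 + (K - 1)⁻¹) * ‖x - y‖ ^ 2 + K * η ^ 2 * ‖g x s‖ ^ 2 := fun s => by
    rw [sub_right_comm]
    have h := norm_add_sq_le_one_add_mul_add (x - y) (-(η • g x s)) (inv_pos.2 hK1)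
    rwa [← sub_eq_add_neg, norm_neg, norm_smul, mul_pow, Real.norm_eq_abs, sq_abs, inv_inv,
      add_sub_cancel, ← mul_assoc] at h
  have hg2 : Integrable (fun s => ‖g x s‖ ^ 2) μ := hx.integrable_norm_pow two_ne_zero
  have hstep : 2 * K * η ^ 2 * L ^ 2 ≤ (K - 1)⁻¹ := by
    have hp : 0 ≤ K * (η * L) := by positivity
    have hp2 : K * (η * L) ≤ 1 / 2 := by linarith
    rw [← one_div, le_div_iff₀ hK1]
    nlinarith [mul_le_mul hp2 hp2 hp (by norm_num)]
  calc ∫ s, ‖x - η • g x s - y‖ ^ 2 ∂μ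
      ≤ ∫ s, ((1 + (K - 1)⁻¹) * ‖x - y‖ ^ 2 + K * η ^ 2 * ‖g x s‖ ^ 2) ∂μ :=
        integral_mono_of_nonneg (ae_of_all _ fun s => by positivity)
          ((integrable_const _).add (hg2.const_mul _)) (ae_of_all _ hyoung)
    _ = (1 + (K - 1)⁻¹) * ‖x - y‖ ^ 2 + K * η ^ 2 * ∫ s, ‖g x s‖ ^ 2 ∂μ := by
        rw [integral_add (integrable_const _) (hg2.const_mul _), integral_const,
          integral_const_mul]
        simp
    _ ≤ _ := by
        have hmoment := mul_le_mul_of_nonneg_left (integral_norm_oracle_sq_le hmean hvar hLip hx)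
          (by positivity : 0 ≤ K * η ^ 2)
        have hcontract := mul_le_mul_of_nonneg_right hstep (sq_nonneg ‖x - y‖)
        rw [div_eq_mul_inv]
        linarith

theorem one_sub_mul_norm_sq_le_integral_norm_sub_smul_oracle_sq (hmean : ∫ s, g x s ∂μ = G x)
    (hvar : ∫ s, ‖g x s - G x‖ ^ 2 ∂μ ≤ σ ^ 2) (hLip : ‖G x - G y‖ ≤ L * ‖x - y‖)
    (hx : MemLp (g x) 2 μ) :
    (1 - 4 * η ^ 2 * L ^ 2) * ‖x - y‖ ^ 2 ≤
      2 * ∫ s, ‖x - η • g x s - y‖ ^ 2 ∂μ + 2 * η ^ 2 * σ ^ 2 + 4 * η ^ 2 * ‖G y‖ ^ 2 := by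
  have hyoung : ∀ s, ‖x - y‖ ^ 2 ≤ 2 * ‖x - η • g x s - y‖ ^ 2 + 2 * η ^ 2 * ‖g x s‖ ^ 2 :=
    fun s => by
      have h := norm_add_sq_le_one_add_mul_add (x - η • g x s - y) (η • g x s) one_pos
      rwa [show x - η • g x s - y + η • g x s = x - y by abel, norm_smul, mul_pow,
        Real.norm_eq_abs, sq_abs, inv_one, ← mul_assoc, one_add_one_eq_two] at h
  have hg2 : Integrable (fun s => ‖g x s‖ ^ 2) μ := hx.integrable_norm_pow two_ne_zero
  have hstep2 : Integrable (fun s => ‖x - η • g x s - y‖ ^ 2) μ :=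
    (((memLp_const x).sub (hx.const_smul η)).sub (memLp_const y)).integrable_norm_pow
      two_ne_zero
  have hmono : ‖x - y‖ ^ 2 ≤
      2 * ∫ s, ‖x - η • g x s - y‖ ^ 2 ∂μ + 2 * η ^ 2 * ∫ s, ‖g x s‖ ^ 2 ∂μ := by
    rw [← integral_const_mul, ← integral_const_mul, ← integral_add (hstep2.const_mul _)
      (hg2.const_mul _)]
    simpa using integral_mono (integrable_const _) ((hstep2.const_mul _).add (hg2.const_mul _))
      hyoung
  have := integral_norm_oracle_sq_le hmean hvar hLip hx
  nlinarith [mul_le_mul_of_nonneg_left this (by positivity : (0 : ℝ) ≤ 2 * η ^ 2)]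

end OracleStep

section RandomRecursion

variable {Ω S β : Type*} [mS : MeasurableSpace S] [MeasurableSpace β] {ξ : ℕ → Ω → S}
  {X : ℕ → Ω → β} {Φ : β → S → β}

theorem measurable_iSup_comap_of_succ_eq (hΦ : Measurable (Function.uncurry Φ)) (x₀ : β)
    (h0 : X 0 = fun _ => x₀) (hsucc : ∀ k ω, X (k + 1) ω = Φ (X k ω) (ξ k ω)) (k : ℕ) :
    Measurable[⨆ i ∈ Set.Iio k, mS.comap (ξ i)] (X k) := by
  induction k with
  | zero => rw [h0]; exact measurable_const
  | succ k ih =>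
    have hmono : (⨆ i ∈ Set.Iio k, mS.comap (ξ i)) ≤ ⨆ i ∈ Set.Iio (k + 1), mS.comap (ξ i) :=
      biSup_mono fun i hi => Set.mem_Iio.2 (Nat.lt_succ_of_lt hi)
    have hξ : Measurable[⨆ i ∈ Set.Iio (k + 1), mS.comap (ξ i)] (ξ k) :=
      (comap_measurable (ξ k)).mono
        (le_biSup (fun i => mS.comap (ξ i)) (Set.mem_Iio.2 (Nat.lt_add_one k))) le_rfl
    rw [funext (hsucc k)]
    exact hΦ.comp ((ih.mono hmono le_rfl).prodMk hξ)

variable [MeasurableSpace Ω]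

theorem ProbabilityTheory.iIndepFun.indepFun_of_measurable_iSup {ι : Type*} {ξ : ι → Ω → S}
    {P : Measure Ω} (hξm : ∀ i, Measurable (ξ i)) (hξ : iIndepFun ξ P) {s : Set ι} {k : ι}
    (hk : k ∉ s) {Y : Ω → β} (hY : Measurable[⨆ i ∈ s, mS.comap (ξ i)] Y) :
    IndepFun Y (ξ k) P := by
  have h := indep_iSup_of_disjoint (fun i => (hξm i).comap_le)
    ((iIndepFun_iff_iIndep _ _ _).1 hξ) (Set.disjoint_singleton_right.2 hk)
  rw [iSup_singleton] at h
  exact (IndepFun_iff_Indep _ _ _).2 (indep_of_indep_of_le_left h hY.comap_le)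

theorem measurable_of_succ_eq (hξm : ∀ n, Measurable (ξ n))
    (hΦ : Measurable (Function.uncurry Φ)) (x₀ : β) (h0 : X 0 = fun _ => x₀)
    (hsucc : ∀ k ω, X (k + 1) ω = Φ (X k ω) (ξ k ω)) (k : ℕ) : Measurable (X k) :=
  (measurable_iSup_comap_of_succ_eq hΦ x₀ h0 hsucc k).mono
    (iSup₂_le fun i _ => (hξm i).comap_le) le_rfl

theorem integral_comp_succ_eq_integral_prod {P : Measure Ω} {μ : Measure S}
    (hξm : ∀ n, Measurable (ξ n)) (hξ_dist : ∀ n, P.map (ξ n) = μ) (hξ : iIndepFun ξ P)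
    (hΦ : Measurable (Function.uncurry Φ)) (x₀ : β) (h0 : X 0 = fun _ => x₀)
    (hsucc : ∀ k ω, X (k + 1) ω = Φ (X k ω) (ξ k ω)) (k : ℕ) {f : β → ℝ} (hf : Measurable f) :
    ∫ ω, f (X (k + 1) ω) ∂P = ∫ p, f (Φ p.1 p.2) ∂((P.map (X k)).prod μ) := by
  have := hξ.isProbabilityMeasure
  have hXk := measurable_of_succ_eq hξm hΦ x₀ h0 hsucc k
  have hlaw : P.map (fun ω => (X k ω, ξ k ω)) = (P.map (X k)).prod μ := by
    rw [← hξ_dist k]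
    exact (indepFun_iff_map_prod_eq_prod_map_map hXk.aemeasurable (hξm k).aemeasurable).1
      (hξ.indepFun_of_measurable_iSup hξm Set.self_notMem_Iio
        (measurable_iSup_comap_of_succ_eq hΦ x₀ h0 hsucc k))
  rw [← hlaw, integral_map (f := fun p => f (Φ p.1 p.2)) (hXk.prodMk (hξm k)).aemeasurable
    (hf.comp hΦ).aestronglyMeasurable]
  simp only [hsucc]

end RandomRecursion

section Integration

variable {α : Type*} [MeasurableSpace α] {ν : Measure α} [IsProbabilityMeasure ν]
  {w : α → ℝ} {a b c d : ℝ}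

theorem integral_le_mul_integral_add_of_ae_le {u : α → ℝ} (hu : Integrable u ν)
    (hw : AEStronglyMeasurable w ν) (hw0 : ∀ᵐ x ∂ν, 0 ≤ w x) (hc : 0 < c)
    (hdom : ∀ᵐ x ∂ν, c * w x ≤ u x + d) (hle : ∀ᵐ x ∂ν, u x ≤ a * w x + b) :
    ∫ x, u x ∂ν ≤ a * ∫ x, w x ∂ν + b := by
  have hwi : Integrable w ν := by
    refine Integrable.mono' ((hu.add (integrable_const d)).const_mul c⁻¹) hw ?_
    filter_upwards [hw0, hdom] with x hx0 hx
    rw [Real.norm_of_nonneg hx0, le_inv_mul_iff₀ hc]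
    exact hx
  calc ∫ x, u x ∂ν ≤ ∫ x, (a * w x + b) ∂ν :=
        integral_mono_ae hu ((hwi.const_mul a).add (integrable_const b)) hle
    _ = a * ∫ x, w x ∂ν + b := by
        rw [integral_add (hwi.const_mul a) (integrable_const b), integral_const_mul,
          integral_const]
        simp

theorem integral_prod_le_mul_integral_add {β : Type*} [MeasurableSpace β] {μ : Measure β}
    [IsProbabilityMeasure μ] {h : α × β → ℝ} (hw : AEStronglyMeasurable w ν)
    (hw0 : ∀ x, 0 ≤ w x) (ha : 0 ≤ a) (hb : 0 ≤ b) (hc : 0 < c)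
    (hdom : ∀ x, Integrable (fun y => h (x, y)) μ → c * w x ≤ ∫ y, h (x, y) ∂μ + d)
    (hle : ∀ x, Integrable (fun y => h (x, y)) μ → ∫ y, h (x, y) ∂μ ≤ a * w x + b) :
    ∫ p, h p ∂(ν.prod μ) ≤ a * ∫ x, w x ∂ν + b := by
  by_cases hh : Integrable h (ν.prod μ)
  · rw [integral_prod h hh]
    exact integral_le_mul_integral_add_of_ae_le hh.integral_prod_left hw (ae_of_all _ hw0) hc
      (hh.prod_right_ae.mono hdom) (hh.prod_right_ae.mono hle)
  · rw [integral_undef hh]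
    have : 0 ≤ ∫ x, w x ∂ν := integral_nonneg hw0
    positivity

end Integration

theorem sgd_one_step_recursion_general
    {E : Type*} [NormedAddCommGroup E] [InnerProductSpace ℝ E]
    [FiniteDimensional ℝ E] [MeasurableSpace E] [BorelSpace E]
    {S : Type*} [MeasurableSpace S]
    {Ω : Type*} [MeasurableSpace Ω]
    (P : Measure Ω) [IsProbabilityMeasure P]
    (μ : Measure S) [IsProbabilityMeasure μ]
    (F : E → ℝ) (Lv σv : ℝ) (hLv : 0 < Lv)
    -- `F` is differentiable with `L_v`-Lipschitz gradient
    (hLip : ∀ x y, ‖gradient F x - gradient F y‖ ≤ Lv * ‖x - y‖)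
    -- stochastic gradient oracle for `F` with variance `σ_v²`
    (g : E → S → E)
    (hg_meas : Measurable fun p : E × S => g p.1 p.2)
    (hg_mean : ∀ x, ∫ s, g x s ∂μ = gradient F x)
    (hg_var : ∀ x, ∫ s, ‖g x s - gradient F x‖ ^ 2 ∂μ ≤ σv ^ 2)
    -- i.i.d. oracle samples `ξ₀, ξ₁, … ~ μ`
    (ξ : ℕ → Ω → S)
    (hξ_meas : ∀ n, Measurable (ξ n))
    (hξ_dist : ∀ n, Measure.map (ξ n) P = μ)
    (hξ_indep : iIndepFun ξ P)
    -- stepsize and horizon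
    (v0 : E) (Kv : ℕ) (hKv : 2 ≤ Kv)
    (ηv : ℝ) (hη0 : 0 < ηv) (hη1 : ηv ≤ 1 / (2 * Kv * Lv))
    -- SGD iterates from `v⁰` with stepsize `η_v`
    (v : ℕ → Ω → E)
    (hv0 : v 0 = fun _ => v0)
    (hvrec : ∀ k ω, v (k + 1) ω = v k ω - ηv • g (v k ω) (ξ k ω)) :
    ∀ k : ℕ, ∫ ω, ‖v (k + 1) ω - v0‖ ^ 2 ∂P ≤
      (1 + 2 / ((Kv : ℝ) - 1)) * ∫ ω, ‖v k ω - v0‖ ^ 2 ∂P +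
        (Kv : ℝ) * ηv ^ 2 * σv ^ 2 + 2 * (Kv : ℝ) * ηv ^ 2 * ‖gradient F v0‖ ^ 2 := by
  intro k
  have hK1 : (0 : ℝ) < Kv - 1 := by
    have : (2 : ℝ) ≤ Kv := by exact_mod_cast hKv
    linarith
  have hηL : 2 * Kv * (ηv * Lv) ≤ 1 := by
    rw [le_div_iff₀ (by positivity)] at hη1
    linarith
  have hΦ : Measurable (Function.uncurry fun x s => x - ηv • g x s) :=
    measurable_fst.sub (hg_meas.const_smul ηv)
  have hvk := measurable_of_succ_eq hξ_meas hΦ v0 hv0 hvrec k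
  have : IsProbabilityMeasure (P.map (v k)) := Measure.isProbabilityMeasure_map hvk.aemeasurable
  have hdist : Measurable fun x : E => ‖x - v0‖ ^ 2 :=
    (measurable_id.sub_const v0).norm.pow_const 2
  have hgx (x : E) (hx : Integrable (fun s => ‖x - ηv • g x s - v0‖ ^ 2) μ) : MemLp (g x) 2 μ :=
    memLp_two_of_integrable_norm_sub_smul_sub_sq hη0.ne'
      hg_meas.of_uncurry_left.aestronglyMeasurable hx
  rw [integral_comp_succ_eq_integral_prod hξ_meas hξ_dist hξ_indep hΦ v0 hv0 hvrec k hdist,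
    ← integral_map hvk.aemeasurable hdist.aestronglyMeasurable, add_assoc]
  refine integral_prod_le_mul_integral_add hdist.aestronglyMeasurable (fun _ => sq_nonneg _)
    (add_nonneg zero_le_one (div_pos two_pos hK1).le) (by positivity)
    (c := (1 - 4 * ηv ^ 2 * Lv ^ 2) / 2) (d := ηv ^ 2 * σv ^ 2 + 2 * ηv ^ 2 * ‖gradient F v0‖ ^ 2)
    (by nlinarith [mul_pos hη0 hLv]) (fun x hx => ?_) (fun x hx => ?_)
  · linarith [one_sub_mul_norm_sq_le_integral_norm_sub_smul_oracle_sq (η := ηv) (hg_mean x)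
      (hg_var x) (hLip x v0) (hgx x hx)]
  · rw [← add_assoc]
    exact integral_norm_sub_smul_oracle_sq_le (hg_mean x) (hg_var x) (hLip x v0) (hgx x hx)
      (by linarith) hη0.le hLv.le hηL

/-- Local update for the personalized model (Lemma 23 of Pillutla et al., as used in
DFedPGP): for an `L_v`-smooth `F`, SGD iterates from `v⁰` with stepsize
`0 < η_v ≤ 1/(2 K_v L_v)` driven by i.i.d. samples of a stochastic gradient oracle with
variance `σ_v²` satisfy, for every `k ≤ K_v`,
`E‖v^{k+1} − v⁰‖² ≤ (1 + 2/(K_v − 1)) E‖v^k − v⁰‖² + K_v η_v² σ_v² + 2 K_v η_v² ‖∇F(v⁰)‖²`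
for every `k ≥ 0` (one-step recursion from the proof of the local-update lemma). -/
theorem sgd_one_step_recursion
    {E : Type*} [NormedAddCommGroup E] [InnerProductSpace ℝ E]
    [FiniteDimensional ℝ E] [MeasurableSpace E] [BorelSpace E]
    {S : Type*} [MeasurableSpace S]
    {Ω : Type*} [MeasurableSpace Ω]
    (P : Measure Ω) [IsProbabilityMeasure P]
    (μ : Measure S) [IsProbabilityMeasure μ]
    (F : E → ℝ) (Lv σv : ℝ) (hLv : 0 < Lv) (hσv : 0 ≤ σv)
    -- `F` is differentiable with `L_v`-Lipschitz gradient
    (hF : Differentiable ℝ F)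
    (hLip : ∀ x y, ‖gradient F x - gradient F y‖ ≤ Lv * ‖x - y‖)
    -- stochastic gradient oracle for `F` with variance `σ_v²`
    (g : E → S → E)
    (hg_meas : Measurable fun p : E × S => g p.1 p.2)
    (hg_mean : ∀ x, ∫ s, g x s ∂μ = gradient F x)
    (hg_var : ∀ x, ∫ s, ‖g x s - gradient F x‖ ^ 2 ∂μ ≤ σv ^ 2)
    -- i.i.d. oracle samples `ξ₀, ξ₁, … ~ μ`
    (ξ : ℕ → Ω → S)
    (hξ_meas : ∀ n, Measurable (ξ n))
    (hξ_dist : ∀ n, Measure.map (ξ n) P = μ)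
    (hξ_indep : iIndepFun ξ P)
    -- stepsize and horizon
    (v0 : E) (Kv : ℕ) (hKv : 2 ≤ Kv)
    (ηv : ℝ) (hη0 : 0 < ηv) (hη1 : ηv ≤ 1 / (2 * Kv * Lv))
    -- SGD iterates from `v⁰` with stepsize `η_v`
    (v : ℕ → Ω → E)
    (hv0 : v 0 = fun _ => v0)
    (hvrec : ∀ k ω, v (k + 1) ω = v k ω - ηv • g (v k ω) (ξ k ω)) :
    ∀ k : ℕ, ∫ ω, ‖v (k + 1) ω - v0‖ ^ 2 ∂P ≤
      (1 + 2 / ((Kv : ℝ) - 1)) * ∫ ω, ‖v k ω - v0‖ ^ 2 ∂P +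
        (Kv : ℝ) * ηv ^ 2 * σv ^ 2 + 2 * (Kv : ℝ) * ηv ^ 2 * ‖gradient F v0‖ ^ 2 :=
  sgd_one_step_recursion_general P μ F Lv σv hLv hLip g hg_meas hg_mean hg_var ξ hξ_meas hξ_dist
    hξ_indep v0 Kv hKv ηv hη0 hη1 v hv0 hvrec
end

section
/- In the multi-client partial personalization setup of the shared-model local update (K_u ≥ 2, |μ_i| ≥ δ > 0, 0 < η_u < δ/(8 L_u K_u), z_i^t := u_i^t/μ_i, z_i^{t,k} := u_i^{t,k}/μ_i, local iterates u_i^{t,k+1} = u_i^{t,k} − η_u g_i(z_i^{t,k}, v_i^{t+1}, ξ_i^k) with i.i.d. oracle samples), for every client i and every 0 ≤ k ≤ K_u − 1 it holds that E‖u_i^{t,k+1} − u_i^t‖² ≤ (1 + 1/(K_u − 1)) E‖u_i^{t,k} − u_i^t‖² + 8 K_u η_u² (σ_u² + σ_g² + E‖∇_u F(z_i^t, V^{t+1})‖²). -/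
/-!
The iterate `u_i^{t,k}` is a measurable function of the samples `ξ_i^0, …, ξ_i^{k-1}`, hence
independent of the fresh sample `ξ_i^k`, so an expectation of a function of both is an integral
against the product of their laws. Pointwise, Lipschitz continuity of `∇_u F_i`, `|μ_i| ≥ δ` and
gradient diversity bound the true gradient at `u / μ_i` by
`(L_u / δ) ‖u - u_i^t‖ + σ_g + ‖∇_u F(z_i^t, V^{t+1})‖`, and the triangle inequality gives
`‖u^{k+1} - u^t‖ ≤ (1 + η_u L_u / δ) ‖u^k - u^t‖ + η_u (‖g - ∇_u F_i‖ + σ_g + ‖∇_u F‖)`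
with `η_u L_u / δ ≤ 1 / (8 K_u)`. Squaring with Young's inequality gives the recursion pointwise,
and by Fubini the noise term integrates to at most `σ_u²` over the fresh sample.
-/

open MeasureTheory ProbabilityTheory Function

theorem add_sq_le_one_add_mul_sq_add {α : Type*} [Field α] [LinearOrder α]
    [IsStrictOrderedRing α] {ε : α} (hε : 0 < ε) (a b : α) :
    (a + b) ^ 2 ≤ (1 + ε) * a ^ 2 + (1 + ε⁻¹) * b ^ 2 := by
  linear_combination two_mul_le_add_mul_sq (a := a) (b := b) hε

theorem sq_le_of_le_one_add_mul_add {K e a b c : ℝ} (hK : 1 < K) (he : 0 ≤ e)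
    (heK : e ≤ 1 / (8 * K)) (hb : 0 ≤ b) (h : b ≤ (1 + e) * a + c) :
    b ^ 2 ≤ (1 + 1 / (K - 1)) * a ^ 2 + 8 * K / 3 * c ^ 2 := by
  have hK3 : 0 < 8 * K - 3 := by linarith
  -- Young's weight `3 / (8K - 3)` turns the weight of `c²` into `8K/3`.
  have hcoef : (1 + 3 / (8 * K - 3)) * (1 + e) ^ 2 ≤ 1 + 1 / (K - 1) := by
    calc _ ≤ (1 + 3 / (8 * K - 3)) * (1 + 1 / (8 * K)) ^ 2 := by gcongr
      _ ≤ 1 + 1 / (K - 1) := by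
        have : 0 < K - 1 := by linarith
        field_simp
        nlinarith
  calc b ^ 2 ≤ ((1 + e) * a + c) ^ 2 := pow_le_pow_left₀ hb h 2
    _ ≤ (1 + 3 / (8 * K - 3)) * ((1 + e) * a) ^ 2 + (1 + (3 / (8 * K - 3))⁻¹) * c ^ 2 :=
      add_sq_le_one_add_mul_sq_add (by positivity) _ _
    _ = (1 + 3 / (8 * K - 3)) * (1 + e) ^ 2 * a ^ 2 + 8 * K / 3 * c ^ 2 := by
      field_simp; ring
    _ ≤ _ := by gcongr

section Step

variable {E : Type*} [NormedAddCommGroup E] [NormedSpace ℝ E]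

theorem norm_sub_smul_sub_le {η : ℝ} (hη : 0 ≤ η) (x y g d : E) :
    ‖x - η • g - y‖ ≤ ‖x - y‖ + η * ‖g - d‖ + η * ‖d‖ := by
  calc ‖x - η • g - y‖ = ‖(x - y) + -(η • (g - d)) + -(η • d)‖ := by
        rw [smul_sub]; abel_nf
    _ ≤ ‖x - y‖ + ‖-(η • (g - d))‖ + ‖-(η • d)‖ := norm_add₃_le
    _ = _ := by rw [norm_neg, norm_neg, norm_smul_of_nonneg hη, norm_smul_of_nonneg hη]

theorem norm_sub_le_norm_sub_smul_sub_add {η : ℝ} (hη : 0 ≤ η) (x y g d : E) :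
    ‖x - y‖ ≤ ‖x - η • g - y‖ + η * ‖g - d‖ + η * ‖d‖ := by
  calc ‖x - y‖ = ‖(x - η • g - y) + η • (g - d) + η • d‖ := by
        rw [smul_sub]; abel_nf
    _ ≤ ‖x - η • g - y‖ + ‖η • (g - d)‖ + ‖η • d‖ := norm_add₃_le
    _ = _ := by rw [norm_smul_of_nonneg hη, norm_smul_of_nonneg hη]

theorem mul_norm_sub_le_norm_sub_smul_sub_add {η : ℝ} (hη : 0 ≤ η) (x y g d : E) :
    η * ‖g - d‖ ≤ ‖x - η • g - y‖ + ‖x - η • d - y‖ := by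
  calc η * ‖g - d‖ = ‖(x - η • d - y) - (x - η • g - y)‖ := by
        rw [← norm_smul_of_nonneg hη, smul_sub]; abel_nf
    _ ≤ ‖x - η • d - y‖ + ‖x - η • g - y‖ := norm_sub_le _ _
    _ = _ := add_comm _ _

theorem norm_apply_inv_smul_le {F : Type*} [NormedAddCommGroup F] {f : E → F} {L δ c : ℝ}
    (hf : ∀ x y, ‖f x - f y‖ ≤ L * ‖x - y‖) (hL : 0 ≤ L) (hδ : 0 < δ) (hc : δ ≤ |c|) (x y : E) :
    ‖f (c⁻¹ • x)‖ ≤ L / δ * ‖x - y‖ + ‖f (c⁻¹ • y)‖ := by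
  calc ‖f (c⁻¹ • x)‖ ≤ ‖f (c⁻¹ • y)‖ + ‖f (c⁻¹ • x) - f (c⁻¹ • y)‖ :=
        norm_le_norm_add_norm_sub' _ _
    _ ≤ ‖f (c⁻¹ • y)‖ + L * (|c|⁻¹ * ‖x - y‖) := by
        grw [hf, ← smul_sub, norm_smul, norm_inv, Real.norm_eq_abs]
    _ ≤ ‖f (c⁻¹ • y)‖ + L * (δ⁻¹ * ‖x - y‖) := by gcongr
    _ = L / δ * ‖x - y‖ + ‖f (c⁻¹ • y)‖ := by ring

variable {K η L r : ℝ} {x y g d : E}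

theorem sq_norm_sub_smul_sub_le (hK : 1 < K) (hη : 0 ≤ η) (hL : 0 ≤ L)
    (hηL : η * L ≤ 1 / (8 * K)) (hd : ‖d‖ ≤ L * ‖x - y‖ + r) :
    ‖x - η • g - y‖ ^ 2 ≤
      (1 + 1 / (K - 1)) * ‖x - y‖ ^ 2 + 8 * K * η ^ 2 * ‖g - d‖ ^ 2 + 4 * K * η ^ 2 * r ^ 2 := by
  have hstep : ‖x - η • g - y‖ ≤ (1 + η * L) * ‖x - y‖ + η * (‖g - d‖ + r) := by
    nlinarith [norm_sub_smul_sub_le hη x y g d]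
  have hsplit := add_sq_le_one_add_mul_sq_add two_pos ‖g - d‖ r
  calc ‖x - η • g - y‖ ^ 2
      ≤ (1 + 1 / (K - 1)) * ‖x - y‖ ^ 2 + 8 * K / 3 * (η ^ 2 * (‖g - d‖ + r) ^ 2) := by
        simpa [mul_pow] using
          sq_le_of_le_one_add_mul_add hK (mul_nonneg hη hL) hηL (norm_nonneg _) hstep
    _ ≤ (1 + 1 / (K - 1)) * ‖x - y‖ ^ 2 +
          8 * K / 3 * (η ^ 2 * ((1 + 2) * ‖g - d‖ ^ 2 + (1 + 2⁻¹) * r ^ 2)) := by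
        gcongr
    _ = _ := by ring

theorem sq_norm_sub_le_of_mul_le_half (hη : 0 ≤ η) (hηL : η * L ≤ 1 / 2)
    (hd : ‖d‖ ≤ L * ‖x - y‖ + r) :
    ‖x - y‖ ^ 2 ≤ 12 * (‖x - η • g - y‖ ^ 2 + η ^ 2 * ‖g - d‖ ^ 2 + η ^ 2 * r ^ 2) := by
  have h : ‖x - y‖ ≤ 2 * (‖x - η • g - y‖ + η * ‖g - d‖ + η * r) := by
    nlinarith [norm_sub_le_norm_sub_smul_sub_add hη x y g d, norm_nonneg (x - y)]
  nlinarith [pow_le_pow_left₀ (norm_nonneg _) h 2, sq_nonneg (‖x - η • g - y‖ - η * ‖g - d‖),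
    sq_nonneg (‖x - η • g - y‖ - η * r), sq_nonneg (η * ‖g - d‖ - η * r)]

theorem mul_sq_norm_sub_le (hη : 0 ≤ η) (x y g d : E) :
    η ^ 2 * ‖g - d‖ ^ 2 ≤ 2 * ‖x - η • g - y‖ ^ 2 + 2 * ‖x - η • d - y‖ ^ 2 := by
  rw [← mul_pow]
  calc (η * ‖g - d‖) ^ 2 ≤ (‖x - η • g - y‖ + ‖x - η • d - y‖) ^ 2 := by
        gcongr; exact mul_norm_sub_le_norm_sub_smul_sub_add hη x y g d
    _ ≤ _ := by linarith [add_sq_le (a := ‖x - η • g - y‖) (b := ‖x - η • d - y‖)]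

end Step

theorem integrable_prod_and_integral_le_of_ae_integral_le {α β : Type*} [MeasurableSpace α]
    [MeasurableSpace β] {μ : Measure α} {ν : Measure β} [IsProbabilityMeasure μ] [SFinite ν]
    {f : α × β → ℝ} {C : ℝ} (hf : AEStronglyMeasurable f (μ.prod ν)) (hf0 : 0 ≤ f)
    (h : ∀ᵐ a ∂μ, Integrable (fun b => f (a, b)) ν ∧ ∫ b, f (a, b) ∂ν ≤ C) :
    Integrable f (μ.prod ν) ∧ ∫ p, f p ∂(μ.prod ν) ≤ C := by
  have hnorm : ∀ a, ∫ b, ‖f (a, b)‖ ∂ν = ∫ b, f (a, b) ∂ν := fun a =>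
    integral_congr_ae (ae_of_all _ fun b => Real.norm_of_nonneg (hf0 (a, b)))
  have hint : Integrable f (μ.prod ν) := by
    refine (integrable_prod_iff hf).2 ⟨h.mono fun _ ha => ha.1, ?_⟩
    refine (integrable_const C).mono' hf.norm.integral_prod_right' ?_
    filter_upwards [h] with a ha
    rw [hnorm, Real.norm_of_nonneg (integral_nonneg fun b => hf0 (a, b))]
    exact ha.2
  refine ⟨hint, ?_⟩
  calc ∫ p, f p ∂(μ.prod ν) = ∫ a, ∫ b, f (a, b) ∂ν ∂μ := integral_prod f hint
    _ ≤ ∫ _, C ∂μ := integral_mono_ae hint.integral_prod_left (integrable_const C)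
        (h.mono fun _ ha => ha.2)
    _ = C := by simp

section Iterate

variable {Ω E S : Type*} [MeasurableSpace E] [mS : MeasurableSpace S]
  {ξ : ℕ → Ω → S} {x : ℕ → Ω → E} {step : E → S → E} {x₀ : E}

theorem measurable_iSup_comap_of_iterate (hstep : Measurable (uncurry step))
    (hx₀ : x 0 = fun _ => x₀) (hx : ∀ n ω, x (n + 1) ω = step (x n ω) (ξ n ω)) (n : ℕ) :
    Measurable[⨆ j ∈ Set.Iio n, mS.comap (ξ j)] (x n) := by
  induction n with
  | zero => rw [hx₀]; exact measurable_const
  | succ n ih =>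
    have hxn : Measurable[⨆ j ∈ Set.Iio (n + 1), mS.comap (ξ j)] (x n) :=
      ih.mono (biSup_mono fun j hj => Nat.lt_succ_of_lt hj) le_rfl
    have hξn : Measurable[⨆ j ∈ Set.Iio (n + 1), mS.comap (ξ j)] (ξ n) :=
      Measurable.of_comap_le (le_biSup (fun j => mS.comap (ξ j)) (Nat.lt_succ_self n))
    rw [show x (n + 1) = fun ω => step (x n ω) (ξ n ω) from funext (hx n)]
    exact hstep.comp (hxn.prodMk hξn)

theorem measurable_of_iterate [MeasurableSpace Ω] (hξ : ∀ n, Measurable (ξ n))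
    (hstep : Measurable (uncurry step))
    (hx₀ : x 0 = fun _ => x₀) (hx : ∀ n ω, x (n + 1) ω = step (x n ω) (ξ n ω)) (n : ℕ) :
    Measurable (x n) :=
  (measurable_iSup_comap_of_iterate hstep hx₀ hx n).mono (iSup₂_le fun j _ => (hξ j).comap_le)
    le_rfl

theorem indepFun_of_iterate [MeasurableSpace Ω] {P : Measure Ω} (hξ : ∀ n, Measurable (ξ n))
    (hind : iIndepFun ξ P) (hstep : Measurable (uncurry step)) (hx₀ : x 0 = fun _ => x₀)
    (hx : ∀ n ω, x (n + 1) ω = step (x n ω) (ξ n ω)) (n : ℕ) :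
    IndepFun (x n) (ξ n) P := by
  have hpast_future := indep_iSup_of_disjoint (fun j => (hξ j).comap_le) hind.iIndep
    (S := Set.Iio n) (T := {n}) (by simp)
  rw [IndepFun_iff_Indep]
  exact indep_of_indep_of_le_right
    (indep_of_indep_of_le_left hpast_future
      (measurable_iSup_comap_of_iterate hstep hx₀ hx n).comap_le)
    (le_biSup (fun j => mS.comap (ξ j)) (Set.mem_singleton n))

end Iterate

section StochasticStep

variable {E S : Type*} [NormedAddCommGroup E] [NormedSpace ℝ E] [MeasurableSpace E]
  [BorelSpace E] [SecondCountableTopology E] [MeasurableSpace S] {μ : Measure S}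
  [IsProbabilityMeasure μ] {G : E → S → E} {D : E → E} {y : E} {K η L r σ : ℝ}

theorem integral_prod_sq_norm_sub_smul_sub_le {ν : Measure E} [IsProbabilityMeasure ν]
    (hG : Measurable (uncurry G)) (hD : Measurable D) (hK : 1 < K) (hη : 0 < η) (hL : 0 ≤ L)
    (hηL : η * L ≤ 1 / (8 * K)) (hvar : ∀ x, ∫ s, ‖G x s - D x‖ ^ 2 ∂μ ≤ σ ^ 2)
    (hgrowth : ∀ x, ‖D x‖ ≤ L * ‖x - y‖ + r) :
    ∫ p, ‖p.1 - η • G p.1 p.2 - y‖ ^ 2 ∂(ν.prod μ) ≤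
      (1 + 1 / (K - 1)) * ∫ p, ‖p.1 - y‖ ^ 2 ∂(ν.prod μ) +
        8 * K * η ^ 2 * σ ^ 2 + 4 * K * η ^ 2 * r ^ 2 := by
  have hG' : Measurable fun p : E × S => G p.1 p.2 := hG
  set ζ : E × S → ℝ := fun p => ‖p.1 - η • G p.1 p.2 - y‖ ^ 2
  set X : E × S → ℝ := fun p => ‖p.1 - y‖ ^ 2
  set Y : E × S → ℝ := fun p => ‖G p.1 p.2 - D p.1‖ ^ 2
  have hYm : Measurable Y := by fun_prop
  have hK1 : 0 < 1 / (K - 1) := one_div_pos.2 (by linarith)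
  by_cases hζ : Integrable ζ (ν.prod μ)
  swap
  · rw [integral_undef hζ]; positivity
  -- `hvar` bounds a Bochner integral, which is `0` on a non-integrable slice: the integrability
  -- of the slices of `Y` has to be extracted from that of `ζ`.
  have hY : Integrable Y (ν.prod μ) ∧ ∫ p, Y p ∂(ν.prod μ) ≤ σ ^ 2 := by
    refine integrable_prod_and_integral_le_of_ae_integral_le hYm.aestronglyMeasurable
      (fun _ => by positivity) ?_
    filter_upwards [hζ.prod_right_ae] with x hx
    have hmajorant : Integrable (fun s => (2 * ζ (x, s) + 2 * ‖x - η • D x - y‖ ^ 2) / η ^ 2) μ :=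
      ((hx.const_mul 2).fun_add (integrable_const _)).div_const _
    refine ⟨hmajorant.mono' (hYm.comp measurable_prodMk_left).aestronglyMeasurable
      (ae_of_all _ fun s => ?_), hvar x⟩
    rw [Real.norm_of_nonneg (by positivity), le_div_iff₀ (by positivity), mul_comm]
    exact mul_sq_norm_sub_le hη.le x y (G x s) (D x)
  -- Otherwise the integral of `X` on the right would be the junk value `0`.
  have hX : Integrable X (ν.prod μ) := by
    have hmajorant : Integrable (fun p => 12 * (ζ p + η ^ 2 * Y p + η ^ 2 * r ^ 2)) (ν.prod μ) :=
      ((hζ.fun_add (hY.1.const_mul _)).fun_add (integrable_const _)).const_mul 12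
    refine hmajorant.mono' (by fun_prop) (ae_of_all _ fun p => ?_)
    rw [Real.norm_of_nonneg (by positivity)]
    refine sq_norm_sub_le_of_mul_le_half hη.le (hηL.trans ?_) (hgrowth p.1)
    rw [div_le_div_iff₀ (by positivity) two_pos]; linarith
  have hXc := hX.const_mul (1 + 1 / (K - 1))
  have hYc := hY.1.const_mul (8 * K * η ^ 2)
  calc ∫ p, ζ p ∂(ν.prod μ)
      ≤ ∫ p, ((1 + 1 / (K - 1)) * X p + 8 * K * η ^ 2 * Y p + 4 * K * η ^ 2 * r ^ 2) ∂(ν.prod μ) :=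
        integral_mono hζ ((hXc.fun_add hYc).fun_add (integrable_const _))
          fun p => sq_norm_sub_smul_sub_le hK hη.le hL hηL (hgrowth p.1)
    _ = (1 + 1 / (K - 1)) * ∫ p, X p ∂(ν.prod μ) + 8 * K * η ^ 2 * ∫ p, Y p ∂(ν.prod μ) +
          4 * K * η ^ 2 * r ^ 2 := by
        rw [integral_add (hXc.fun_add hYc) (integrable_const _), integral_add hXc hYc,
          integral_const_mul, integral_const_mul]
        simp
    _ ≤ _ := by gcongr; exact hY.2

theorem integral_sq_norm_sub_smul_sub_le_of_indepFun {Ω : Type*} [MeasurableSpace Ω]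
    {P : Measure Ω} [IsProbabilityMeasure P] {x : Ω → E} {s : Ω → S} (hx : Measurable x)
    (hs : Measurable s) (hxs : IndepFun x s P) (hlaw : P.map s = μ)
    (hG : Measurable (uncurry G)) (hD : Measurable D) (hK : 1 < K) (hη : 0 < η) (hL : 0 ≤ L)
    (hηL : η * L ≤ 1 / (8 * K)) (hvar : ∀ x, ∫ s, ‖G x s - D x‖ ^ 2 ∂μ ≤ σ ^ 2)
    (hgrowth : ∀ x, ‖D x‖ ≤ L * ‖x - y‖ + r) :
    ∫ ω, ‖x ω - η • G (x ω) (s ω) - y‖ ^ 2 ∂P ≤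
      (1 + 1 / (K - 1)) * ∫ ω, ‖x ω - y‖ ^ 2 ∂P +
        8 * K * η ^ 2 * σ ^ 2 + 4 * K * η ^ 2 * r ^ 2 := by
  have hG' : Measurable fun p : E × S => G p.1 p.2 := hG
  have hpair : Measurable fun ω => (x ω, s ω) := hx.prodMk hs
  have hlaw_pair : P.map (fun ω => (x ω, s ω)) = (P.map x).prod μ :=
    hlaw ▸ hxs.map_prod_eq_prod_map_map hx.aemeasurable hs.aemeasurable
  have := Measure.isProbabilityMeasure_map (μ := P) hx.aemeasurable
  have hstep : ∫ ω, ‖x ω - η • G (x ω) (s ω) - y‖ ^ 2 ∂P =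
      ∫ p, ‖p.1 - η • G p.1 p.2 - y‖ ^ 2 ∂((P.map x).prod μ) := by
    rw [← hlaw_pair, integral_map hpair.aemeasurable (by fun_prop)]
  have hstart : ∫ ω, ‖x ω - y‖ ^ 2 ∂P = ∫ p, ‖p.1 - y‖ ^ 2 ∂((P.map x).prod μ) := by
    rw [← hlaw_pair, integral_map hpair.aemeasurable (by fun_prop)]
  rw [hstep, hstart]
  exact integral_prod_sq_norm_sub_smul_sub_le hG hD hK hη hL hηL hvar hgrowth

theorem integral_sq_norm_iterate_succ_sub_le {Ω : Type*} [MeasurableSpace Ω] {P : Measure Ω}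
    [IsProbabilityMeasure P] {ξ : ℕ → Ω → S} {x : ℕ → Ω → E} (hξ : ∀ n, Measurable (ξ n))
    (hind : iIndepFun ξ P) (hlaw : ∀ n, P.map (ξ n) = μ) (hx₀ : x 0 = fun _ => y)
    (hx : ∀ n ω, x (n + 1) ω = x n ω - η • G (x n ω) (ξ n ω))
    (hG : Measurable (uncurry G)) (hD : Measurable D) (hK : 1 < K) (hη : 0 < η) (hL : 0 ≤ L)
    (hηL : η * L ≤ 1 / (8 * K)) (hvar : ∀ x, ∫ s, ‖G x s - D x‖ ^ 2 ∂μ ≤ σ ^ 2)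
    (hgrowth : ∀ x, ‖D x‖ ≤ L * ‖x - y‖ + r) (n : ℕ) :
    ∫ ω, ‖x (n + 1) ω - y‖ ^ 2 ∂P ≤
      (1 + 1 / (K - 1)) * ∫ ω, ‖x n ω - y‖ ^ 2 ∂P +
        8 * K * η ^ 2 * σ ^ 2 + 4 * K * η ^ 2 * r ^ 2 := by
  have hstep : Measurable (uncurry fun x s => x - η • G x s) :=
    measurable_fst.sub (hG.const_smul η)
  simp_rw [hx n]
  exact integral_sq_norm_sub_smul_sub_le_of_indepFun (measurable_of_iterate hξ hstep hx₀ hx n)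
    (hξ n) (indepFun_of_iterate hξ hind hstep hx₀ hx n) (hlaw n) hG hD hK hη hL hηL hvar hgrowth

end StochasticStep

theorem dfedpgp_shared_one_step_recursion_general
    {E0 : Type*} [NormedAddCommGroup E0] [InnerProductSpace ℝ E0]
    [FiniteDimensional ℝ E0] [MeasurableSpace E0] [BorelSpace E0]
    {S : Type*} [MeasurableSpace S]
    {Ω : Type*} [MeasurableSpace Ω]
    (P : Measure Ω) [IsProbabilityMeasure P]
    (μS : Measure S) [IsProbabilityMeasure μS]
    {m : ℕ}
    {E : Fin m → Type*}
    -- client losses, smooth in the shared variable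
    (Fi : ∀ i, E0 → E i → ℝ)
    (Lu σu σg δ : ℝ) (hLu : 0 < Lu) (hσg : 0 ≤ σg) (hδ : 0 < δ)
    (hLip : ∀ i w x y, ‖gradient (fun x' => Fi i x' w) x -
      gradient (fun x' => Fi i x' w) y‖ ≤ Lu * ‖x - y‖)
    -- partial gradient diversity
    (hdivers : ∀ (x : E0) (W : ∀ i, E i) (i : Fin m),
      ‖gradient (fun x' => Fi i x' (W i)) x -
        gradient (fun x' => (1 / m : ℝ) * ∑ j, Fi j x' (W j)) x‖ ^ 2 ≤ σg ^ 2)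
    -- stochastic gradient oracles
    (g : ∀ i, E0 → E i → S → E0)
    (hg_meas : ∀ i w, Measurable fun p : E0 × S => g i p.1 w p.2)
    (hg_var : ∀ i x w,
      ∫ s, ‖g i x w s - gradient (fun x' => Fi i x' w) x‖ ^ 2 ∂μS ≤ σu ^ 2)
    -- fixed round data: personal parameters `v_i^{t+1}`, push-sum weights, starts
    (V : ∀ i, E i)
    (μw : Fin m → ℝ) (hμw : ∀ i, δ ≤ |μw i|)
    (u0 : Fin m → E0)
    (Ku : ℕ) (hKu : 2 ≤ Ku)
    (ηu : ℝ) (hη0 : 0 < ηu) (hη1 : ηu < δ / (8 * Lu * Ku))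
    -- i.i.d. oracle samples
    (ξ : Fin m → ℕ → Ω → S)
    (hξ_meas : ∀ i k, Measurable (ξ i k))
    (hξ_dist : ∀ i k, Measure.map (ξ i k) P = μS)
    (hξ_indep : iIndepFun (fun p : Fin m × ℕ => ξ p.1 p.2) P)
    -- local iterates, with `z_i^{t,k} = u_i^{t,k}/μ_i`
    (u : Fin m → ℕ → Ω → E0)
    (hu0 : ∀ i, u i 0 = fun _ => u0 i)
    (hurec : ∀ i k ω, u i (k + 1) ω =
      u i k ω - ηu • g i ((μw i)⁻¹ • u i k ω) (V i) (ξ i k ω)) :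
    ∀ i, ∀ k < Ku, ∫ ω, ‖u i (k + 1) ω - u0 i‖ ^ 2 ∂P ≤
      (1 + 1 / ((Ku : ℝ) - 1)) * ∫ ω, ‖u i k ω - u0 i‖ ^ 2 ∂P +
        8 * Ku * ηu ^ 2 * (σu ^ 2 + σg ^ 2 +
          ‖gradient (fun x' => (1 / m : ℝ) * ∑ j, Fi j x' (V j))
            ((μw i)⁻¹ • u0 i)‖ ^ 2) := by
  intro i k _
  set GF := gradient (fun x' => (1 / m : ℝ) * ∑ j, Fi j x' (V j)) ((μw i)⁻¹ • u0 i)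
  set D : E0 → E0 := fun x => gradient (fun x' => Fi i x' (V i)) ((μw i)⁻¹ • x)
  have hD : Measurable D := by
    have : LipschitzWith (Real.toNNReal Lu) (gradient fun x' => Fi i x' (V i)) :=
      LipschitzWith.of_dist_le' fun x y => by simpa [dist_eq_norm] using hLip i (V i) x y
    exact (this.continuous.comp (continuous_const_smul _)).measurable
  have hdivers_i : ‖D (u0 i)‖ ≤ σg + ‖GF‖ := by
    grw [norm_le_norm_add_norm_sub' (D (u0 i)) GF, add_comm,
      (pow_le_pow_iff_left₀ (norm_nonneg _) hσg two_ne_zero).1 (hdivers _ V i)]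
  have hgrowth : ∀ x, ‖D x‖ ≤ Lu / δ * ‖x - u0 i‖ + (σg + ‖GF‖) := fun x =>
    (norm_apply_inv_smul_le (hLip i (V i)) hLu.le hδ (hμw i) x (u0 i)).trans (by gcongr)
  have hηL : ηu * (Lu / δ) ≤ 1 / (8 * Ku) := by
    rw [lt_div_iff₀ (by positivity)] at hη1
    rw [mul_div_assoc', div_le_div_iff₀ hδ (by positivity)]
    linarith
  calc ∫ ω, ‖u i (k + 1) ω - u0 i‖ ^ 2 ∂P
      ≤ (1 + 1 / ((Ku : ℝ) - 1)) * ∫ ω, ‖u i k ω - u0 i‖ ^ 2 ∂P + 8 * Ku * ηu ^ 2 * σu ^ 2 +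
          4 * Ku * ηu ^ 2 * (σg + ‖GF‖) ^ 2 :=
        integral_sq_norm_iterate_succ_sub_le (G := fun x s => g i ((μw i)⁻¹ • x) (V i) s)
          (hξ_meas i) (hξ_indep.precomp (g := Prod.mk i) (Prod.mk_right_injective i))
          (hξ_dist i) (hu0 i) (hurec i)
          ((hg_meas i (V i)).comp ((measurable_fst.const_smul _).prodMk measurable_snd)) hD
          (by exact_mod_cast hKu) hη0 (by positivity) hηL (fun x => hg_var i _ (V i)) hgrowth k
    _ ≤ _ := by
      have := mul_le_mul_of_nonneg_left (add_sq_le (a := σg) (b := ‖GF‖))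
        (by positivity : 0 ≤ 4 * (Ku : ℝ) * ηu ^ 2)
      linarith

/-- One-step recursion from the proof of the shared-model local-update lemma of
DFedPGP: for every client `i` and every `0 ≤ k ≤ K_u − 1`,
`E‖u_i^{t,k+1} − u_i^t‖² ≤ (1 + 1/(K_u − 1)) E‖u_i^{t,k} − u_i^t‖²
  + 8 K_u η_u² (σ_u² + σ_g² + ‖∇_u F(z_i^t, V^{t+1})‖²)`. -/
theorem dfedpgp_shared_one_step_recursion
    {E0 : Type*} [NormedAddCommGroup E0] [InnerProductSpace ℝ E0]
    [FiniteDimensional ℝ E0] [MeasurableSpace E0] [BorelSpace E0]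
    {S : Type*} [MeasurableSpace S]
    {Ω : Type*} [MeasurableSpace Ω]
    (P : Measure Ω) [IsProbabilityMeasure P]
    (μS : Measure S) [IsProbabilityMeasure μS]
    {m : ℕ} (hm : 0 < m)
    {E : Fin m → Type*} [∀ i, NormedAddCommGroup (E i)]
    [∀ i, InnerProductSpace ℝ (E i)]
    -- client losses, smooth in the shared variable
    (Fi : ∀ i, E0 → E i → ℝ)
    (Lu σu σg δ : ℝ) (hLu : 0 < Lu) (hσu : 0 ≤ σu) (hσg : 0 ≤ σg) (hδ : 0 < δ)
    (hdiff : ∀ i w, Differentiable ℝ fun x => Fi i x w)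
    (hLip : ∀ i w x y, ‖gradient (fun x' => Fi i x' w) x -
      gradient (fun x' => Fi i x' w) y‖ ≤ Lu * ‖x - y‖)
    -- partial gradient diversity
    (hdivers : ∀ (x : E0) (W : ∀ i, E i) (i : Fin m),
      ‖gradient (fun x' => Fi i x' (W i)) x -
        gradient (fun x' => (1 / m : ℝ) * ∑ j, Fi j x' (W j)) x‖ ^ 2 ≤ σg ^ 2)
    -- stochastic gradient oracles
    (g : ∀ i, E0 → E i → S → E0)
    (hg_meas : ∀ i w, Measurable fun p : E0 × S => g i p.1 w p.2)
    (hg_mean : ∀ i x w, ∫ s, g i x w s ∂μS = gradient (fun x' => Fi i x' w) x)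
    (hg_var : ∀ i x w,
      ∫ s, ‖g i x w s - gradient (fun x' => Fi i x' w) x‖ ^ 2 ∂μS ≤ σu ^ 2)
    -- fixed round data: personal parameters `v_i^{t+1}`, push-sum weights, starts
    (V : ∀ i, E i)
    (μw : Fin m → ℝ) (hμw : ∀ i, δ ≤ |μw i|)
    (u0 : Fin m → E0)
    (Ku : ℕ) (hKu : 2 ≤ Ku)
    (ηu : ℝ) (hη0 : 0 < ηu) (hη1 : ηu < δ / (8 * Lu * Ku))
    -- i.i.d. oracle samples
    (ξ : Fin m → ℕ → Ω → S)
    (hξ_meas : ∀ i k, Measurable (ξ i k))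
    (hξ_dist : ∀ i k, Measure.map (ξ i k) P = μS)
    (hξ_indep : iIndepFun (fun p : Fin m × ℕ => ξ p.1 p.2) P)
    -- local iterates, with `z_i^{t,k} = u_i^{t,k}/μ_i`
    (u : Fin m → ℕ → Ω → E0)
    (hu0 : ∀ i, u i 0 = fun _ => u0 i)
    (hurec : ∀ i k ω, u i (k + 1) ω =
      u i k ω - ηu • g i ((μw i)⁻¹ • u i k ω) (V i) (ξ i k ω)) :
    ∀ i, ∀ k < Ku, ∫ ω, ‖u i (k + 1) ω - u0 i‖ ^ 2 ∂P ≤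
      (1 + 1 / ((Ku : ℝ) - 1)) * ∫ ω, ‖u i k ω - u0 i‖ ^ 2 ∂P +
        8 * Ku * ηu ^ 2 * (σu ^ 2 + σg ^ 2 +
          ‖gradient (fun x' => (1 / m : ℝ) * ∑ j, Fi j x' (V j))
            ((μw i)⁻¹ • u0 i)‖ ^ 2) :=
  dfedpgp_shared_one_step_recursion_general P μS Fi Lu σu σg δ hLu hσg hδ hLip hdivers g hg_meas
    hg_var V μw hμw u0 Ku hKu ηu hη0 hη1 ξ hξ_meas hξ_dist hξ_indep u hu0 hurec
end
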